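/- If q is a nondegenerate critical point of U of Morse index k, then (q₁,q₂,−q₂,q₁) is a nondegenerate critical point of H of Morse index k. -/

import Mathlib

/-- The Hessian of f at x as a bilinear expression, via the second derivative. -/
noncomputable def hess {E : Type*} [NormedAddCommGroup E] [NormedSpace ℝ E]
    (f : E → ℝ) (x : E) (v w : E) : ℝ :=
  fderiv ℝ (fderiv ℝ f) x v w

/-- x is a nondegenerate critical point of f of Morse index k: df(x) = 0, the
Hessian is nondegenerate, and k is the dimension of a maximal subspace on which
the Hessian is negative definite. -/
def IsNondegCritWithIndex {E : Type*} [NormedAddCommGroup E] [NormedSpace ℝ E]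
    (f : E → ℝ) (x : E) (k : ℕ) : Prop :=
  fderiv ℝ f x = 0 ∧
  (∀ v : E, v ≠ 0 → ∃ w : E, hess f x v w ≠ 0) ∧
  (∃ W : Submodule ℝ E, Module.finrank ℝ W = k ∧
      (∀ v ∈ W, v ≠ 0 → hess f x v v < 0) ∧
      (∀ W' : Submodule ℝ E, (∀ v ∈ W', v ≠ 0 → hess f x v v < 0) →
        Module.finrank ℝ W' ≤ k))

abbrev mlE := (ℝ × ℝ) × (ℝ × ℝ)

noncomputable def mlL1 : mlE →L[ℝ] ℝ :=
  (ContinuousLinearMap.fst ℝ ℝ ℝ).comp (ContinuousLinearMap.snd ℝ (ℝ × ℝ) (ℝ × ℝ)) +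
  (ContinuousLinearMap.snd ℝ ℝ ℝ).comp (ContinuousLinearMap.fst ℝ (ℝ × ℝ) (ℝ × ℝ))

noncomputable def mlL2 : mlE →L[ℝ] ℝ :=
  (ContinuousLinearMap.snd ℝ ℝ ℝ).comp (ContinuousLinearMap.snd ℝ (ℝ × ℝ) (ℝ × ℝ)) -
  (ContinuousLinearMap.fst ℝ ℝ ℝ).comp (ContinuousLinearMap.fst ℝ (ℝ × ℝ) (ℝ × ℝ))

@[simp] lemma mlL1_apply (x : mlE) : mlL1 x = x.2.1 + x.1.2 := rfl
@[simp] lemma mlL2_apply (x : mlE) : mlL2 x = x.2.2 - x.1.1 := rfl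

noncomputable def mlMG : mlE →L[ℝ] (mlE →L[ℝ] ℝ) :=
  mlL1.smulRight mlL1 + mlL2.smulRight mlL2

lemma mlMG_apply (v w : mlE) :
    mlMG v w = (v.2.1 + v.1.2) * (w.2.1 + w.1.2) + (v.2.2 - v.1.1) * (w.2.2 - w.1.1) := by
  simp [mlMG, smul_eq_mul]

lemma hasFDerivG (x : mlE) :
    HasFDerivAt (fun x : mlE => (1/2) * ((x.2.1 + x.1.2) ^ 2 + (x.2.2 - x.1.1) ^ 2))
      (mlMG x) x := by
  have h : HasFDerivAt (fun x : mlE => (1/2) * ((mlL1 x) * (mlL1 x) + (mlL2 x) * (mlL2 x)))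
      (((1:ℝ)/2) • ((mlL1 x • mlL1 + mlL1 x • mlL1) + (mlL2 x • mlL2 + mlL2 x • mlL2))) x := by
    exact (((mlL1.hasFDerivAt.mul mlL1.hasFDerivAt).add
      (mlL2.hasFDerivAt.mul mlL2.hasFDerivAt)).const_mul (1/2))
  have heq : (fun x : mlE => (1/2) * ((x.2.1 + x.1.2) ^ 2 + (x.2.2 - x.1.1) ^ 2)) =
      (fun x : mlE => (1/2) * ((mlL1 x) * (mlL1 x) + (mlL2 x) * (mlL2 x))) := by
    funext y; simp; ring
  rw [heq]
  convert h using 1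
  refine ContinuousLinearMap.ext fun w => ?_
  simp [mlMG, smul_eq_mul]
  ring

noncomputable def mlC : ((ℝ × ℝ) →L[ℝ] ℝ) →L[ℝ] (mlE →L[ℝ] ℝ) :=
  (ContinuousLinearMap.compL ℝ mlE (ℝ × ℝ) ℝ).flip (ContinuousLinearMap.fst ℝ (ℝ × ℝ) (ℝ × ℝ))

@[simp] lemma mlC_apply (A : (ℝ × ℝ) →L[ℝ] ℝ) (x : mlE) : mlC A x = A x.1 := rfl

/-- Key computation: first derivative and Hessian of the lifted Hamiltonian. -/
lemma ml_key (U : (ℝ × ℝ) → ℝ) (q : ℝ × ℝ) (hU : ContDiffAt ℝ 2 U q) :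
    fderiv ℝ (fun x : mlE =>
        (1/2) * ((x.2.1 + x.1.2) ^ 2 + (x.2.2 - x.1.1) ^ 2) + U x.1) (q, (-q.2, q.1))
      = mlMG (q, (-q.2, q.1)) + mlC (fderiv ℝ U q) ∧
    (∀ v w : mlE, hess (fun x : mlE =>
        (1/2) * ((x.2.1 + x.1.2) ^ 2 + (x.2.2 - x.1.1) ^ 2) + U x.1) (q, (-q.2, q.1)) v w
      = mlMG v w + hess U q v.1 w.1) := by
  set z : mlE := (q, (-q.2, q.1)) with hz
  set H : mlE → ℝ := fun x =>
      (1/2) * ((x.2.1 + x.1.2) ^ 2 + (x.2.2 - x.1.1) ^ 2) + U x.1 with hH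
  set D : mlE → (mlE →L[ℝ] ℝ) := fun x => mlMG x + mlC (fderiv ℝ U x.1) with hD
  have hev : ∀ᶠ y in nhds q, DifferentiableAt ℝ U y := by
    filter_upwards [hU.eventually (by decide)] with y hy
    exact hy.differentiableAt (by norm_num)
  have hevz : ∀ᶠ x : mlE in nhds z, DifferentiableAt ℝ U x.1 :=
    Filter.Tendsto.eventually (continuousAt_fst : ContinuousAt Prod.fst z) hev
  have h1 : ∀ᶠ x in nhds z, HasFDerivAt H (D x) x := by
    filter_upwards [hevz] with x hx
    have hu : HasFDerivAt (fun y : mlE => U y.1)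
        ((fderiv ℝ U x.1).comp (ContinuousLinearMap.fst ℝ (ℝ × ℝ) (ℝ × ℝ))) x :=
      hx.hasFDerivAt.comp x hasFDerivAt_fst
    have := (hasFDerivG x).add hu
    have e : D x = mlMG x + (fderiv ℝ U x.1).comp (ContinuousLinearMap.fst ℝ (ℝ × ℝ) (ℝ × ℝ)) :=
      ContinuousLinearMap.ext fun w => rfl
    rw [e]
    exact this
  have h2 : fderiv ℝ H =ᶠ[nhds z] D := h1.mono fun x hx => hx.fderiv
  have hdU : HasFDerivAt (fderiv ℝ U) (fderiv ℝ (fderiv ℝ U) q) q := by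
    have : ContDiffAt ℝ 1 (fderiv ℝ U) q := hU.fderiv_right (by norm_num)
    exact (this.differentiableAt (by norm_num)).hasFDerivAt
  have hDdiff : HasFDerivAt D
      (mlMG + mlC.comp ((fderiv ℝ (fderiv ℝ U) q).comp
        (ContinuousLinearMap.fst ℝ (ℝ × ℝ) (ℝ × ℝ)))) z :=
    mlMG.hasFDerivAt.add (mlC.hasFDerivAt.comp z (hdU.comp z hasFDerivAt_fst))
  have hsnd : fderiv ℝ (fderiv ℝ H) z
      = mlMG + mlC.comp ((fderiv ℝ (fderiv ℝ U) q).comp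
          (ContinuousLinearMap.fst ℝ (ℝ × ℝ) (ℝ × ℝ))) := by
    rw [h2.fderiv_eq, hDdiff.fderiv]
  refine ⟨?_, ?_⟩
  · exact h1.self_of_nhds.fderiv
  · intro v w
    simp [hess, hsnd]

/-- The graph map u ↦ (u, (-u.2, u.1)). -/
noncomputable def mlJ : (ℝ × ℝ) →ₗ[ℝ] mlE where
  toFun u := (u, (-u.2, u.1))
  map_add' a b := by ext <;> simp <;> ring
  map_smul' c a := by ext <;> simp

@[simp] lemma mlJ_apply (u : ℝ × ℝ) : mlJ u = (u, (-u.2, u.1)) := rfl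

set_option maxHeartbeats 1000000 in
/-- If q is a nondegenerate critical point of U of Morse index k, then
(q₁,q₂,−q₂,q₁) is a nondegenerate critical point of
H(q,p) = ½((p₁+q₂)² + (p₂−q₁)²) + U(q) of Morse index k. -/
theorem morse_index_lift (U : (ℝ × ℝ) → ℝ) (q : ℝ × ℝ) (k : ℕ)
    (hU : ContDiffAt ℝ 2 U q)
    (h : IsNondegCritWithIndex U q k) :
    IsNondegCritWithIndex
      (fun x : (ℝ × ℝ) × (ℝ × ℝ) =>
        (1/2) * ((x.2.1 + x.1.2) ^ 2 + (x.2.2 - x.1.1) ^ 2) + U x.1)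
      (q, (-q.2, q.1)) k := by
  obtain ⟨hcrit, hnd, W, hWrank, hWneg, hWmax⟩ := h
  obtain ⟨hd1, hd2⟩ := ml_key U q hU
  have hq00 : ∀ u : ℝ × ℝ, hess U q u 0 = 0 := by
    intro u; simp [hess]
  refine ⟨?_, ?_, ?_⟩
  · -- first derivative vanishes
    rw [hd1, hcrit]
    refine ContinuousLinearMap.ext fun w => ?_
    simp [mlMG_apply]
  · -- nondegeneracy
    intro v hv
    by_cases ha : v.2.1 + v.1.2 = 0 ∧ v.2.2 - v.1.1 = 0
    · -- kinetic part vanishes; use nondegeneracy of U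
      have hv1 : v.1 ≠ 0 := by
        intro h0
        apply hv
        have h1 : v.1.1 = 0 := congrArg Prod.fst h0
        have h2 : v.1.2 = 0 := congrArg Prod.snd h0
        have h3 : v.2.1 = 0 := by have := ha.1; linarith
        have h4 : v.2.2 = 0 := by have := ha.2; linarith
        have : v = ((v.1.1, v.1.2), (v.2.1, v.2.2)) := rfl
        rw [this, h1, h2, h3, h4]
        rfl
      obtain ⟨w1, hw1⟩ := hnd v.1 hv1
      refine ⟨(w1, 0), ?_⟩
      rw [hd2, mlMG_apply, ha.1, ha.2]
      simpa using hw1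
    · -- kinetic part sees v
      refine ⟨(0, (v.2.1 + v.1.2, v.2.2 - v.1.1)), ?_⟩
      rw [hd2, mlMG_apply]
      simp only [hq00, Prod.fst_zero, Prod.snd_zero, add_zero, sub_zero]
      have : (v.2.1 + v.1.2) * (v.2.1 + v.1.2) + (v.2.2 - v.1.1) * (v.2.2 - v.1.1) > 0 := by
        rcases not_and_or.mp ha with h' | h'
        · nlinarith [mul_self_nonneg (v.2.2 - v.1.1), mul_self_pos.mpr h']
        · nlinarith [mul_self_nonneg (v.2.1 + v.1.2), mul_self_pos.mpr h']
      exact ne_of_gt this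
  · -- maximal negative subspace
    have hJinj : Function.Injective mlJ := by
      intro a b hab
      have := congrArg Prod.fst hab
      simpa using this
    refine ⟨W.map mlJ, ?_, ?_, ?_⟩
    · rw [← hWrank]
      exact (Submodule.equivMapOfInjective mlJ hJinj W).finrank_eq.symm
    · rintro v hvW hv
      obtain ⟨u, hu, rfl⟩ := Submodule.mem_map.mp hvW
      have hu0 : u ≠ 0 := by
        intro h0; apply hv; rw [h0, map_zero]
      have hneg := hWneg u hu hu0
      rw [hd2, mlMG_apply]
      show (-u.2 + u.2) * (-u.2 + u.2) + (u.1 - u.1) * (u.1 - u.1) + hess U q u u < 0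
      simpa using hneg
    · intro W'' hW''
      set f : W'' →ₗ[ℝ] (ℝ × ℝ) :=
        (LinearMap.fst ℝ (ℝ × ℝ) (ℝ × ℝ)).comp W''.subtype with hf
      have hfapp : ∀ v : W'', f v = (v : mlE).1 := fun v => rfl
      have hposneg : ∀ v : mlE, v ∈ W'' → v ≠ 0 → hess U q v.1 v.1 < 0 ∧ v.1 ≠ 0 := by
        intro v hvW hv
        have hQ := hW'' v hvW hv
        rw [hd2, mlMG_apply] at hQ
        constructor
        · nlinarith [mul_self_nonneg (v.2.1 + v.1.2), mul_self_nonneg (v.2.2 - v.1.1)]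
        · intro h0
          rw [h0, hq00] at hQ
          nlinarith [mul_self_nonneg (v.2.1 + v.1.2), mul_self_nonneg (v.2.2 - v.1.1)]
      have hfinj : Function.Injective f := by
        rw [← LinearMap.ker_eq_bot]
        rw [Submodule.eq_bot_iff]
        intro v hvker
        by_contra hv0
        have hv : (v : mlE) ≠ 0 := fun hc => hv0 (Subtype.ext hc)
        have := (hposneg v v.2 hv).2
        exact this (by simpa [hfapp] using hvker)
      have hrange : ∀ u ∈ LinearMap.range f, u ≠ 0 → hess U q u u < 0 := by
        rintro u ⟨v, rfl⟩ hu
        have hv : (v : mlE) ≠ 0 := by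
          intro hc
          apply hu
          rw [hfapp, hc]
          rfl
        exact (hposneg v v.2 hv).1
      calc Module.finrank ℝ W'' = Module.finrank ℝ (LinearMap.range f) :=
            (LinearMap.finrank_range_of_inj hfinj).symm
        _ ≤ k := hWmax (LinearMap.range f) hrange
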